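/- Every weighted system whose weight algebra is a finite, completely idempotent, distributive complete M-monoid with a compatible partial order is closed; more precisely, if (K,⊕,0,Ω,Σ) is a complete and distributive M-monoid such that K is finite, Σ_{i∈I} k = k for every k ∈ K and every nonempty countable index set I, and there is a partial order ⪯ on K such that kᵢ ⪯ ω(k₁,…,k_k) for every ω ∈ Ω, all arguments k₁,…,k_k ∈ K and every i, then every weighted system (N,R,wt,K) is |K|-closed, and in particular closed. -/

import Mathlib

open scoped Classical

/-- Trees over a ranked set `R` with arity function `ar`:
`RT.node r ts` is a tree whose root is labelled `r` and which has `ar r` children. -/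
inductive RT (R : Type) (ar : R → ℕ) : Type
  | node (r : R) (children : Fin (ar r) → RT R ar)

namespace RT

variable {R : Type} {ar : R → ℕ}

/-- The rule labelling the root of a tree. -/
def rootRule : RT R ar → R
  | node r _ => r

/-- The subtree at a position (`none` if the position is not a position of the tree). -/
def subAt : RT R ar → List ℕ → Option (RT R ar)
  | t, [] => some t
  | node r ts, i :: p => if h : i < ar r then subAt (ts ⟨i, h⟩) p else none

/-- Replace the subtree at a position by another tree. -/
def replaceAt : RT R ar → List ℕ → RT R ar → RT R ar
  | _, [], s => s
  | node r ts, i :: p, s => node r fun j => if j.1 = i then replaceAt (ts j) p s else ts j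

/-- The sequence of rule labels from the root to a position, inclusive. -/
def seqTo : RT R ar → List ℕ → Option (List R)
  | node r _, [] => some [r]
  | node r ts, i :: p => if h : i < ar r then (seqTo (ts ⟨i, h⟩) p).map (fun l => r :: l) else none

/-- `p` is a leaf position of `d`, i.e. a valid position with no child positions. -/
def LeafAt (d : RT R ar) (p : List ℕ) : Prop :=
  ∃ t, subAt d p = some t ∧ ar t.rootRule = 0

/-- The height of a tree: `0` on nullary nodes, otherwise `1` plus the maximum height
of the direct subtrees. -/
def height : RT R ar → ℕ
  | node _ ts => Finset.univ.sup fun i => height (ts i) + 1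

end RT

/-- The weight of a tree: evaluate it bottom-up, interpreting each rule `r` by the
operation `wt r`. -/
def wtval {K R : Type} {ar : R → ℕ} (wt : ∀ r : R, (Fin (ar r) → K) → K) : RT R ar → K
  | .node r ts => wt r fun i => wtval wt (ts i)

section Cyclicity

variable {R : Type} {ar : R → ℕ}

/-- A string over `R` is an elementary cycle if it has length `> 1`, its first and last
symbols coincide, and it becomes repetition-free after deleting its last (resp. first)
symbol. -/
def ElementaryCycle (w : List R) : Prop :=
  1 < w.length ∧ w.head? = w.getLast? ∧ w.dropLast.Nodup ∧ w.tail.Nodup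

/-- `ρ` is `(c,w)`-cyclic: `ρ = v₀ w v₁ ⋯ w v_c` (with `c` occurrences of the elementary
cycle `w`) where `w` is not an infix of any `vᵢ`. -/
def CWCyclic (c : ℕ) (w ρ : List R) : Prop :=
  ElementaryCycle w ∧
  ∃ v : ℕ → List R,
    ρ = v 0 ++ (((List.range c).map fun i => w ++ v (i + 1)).flatten) ∧
    ∀ i ≤ c, ¬ w <:+: v i

/-- `ρ` is `c`-cyclic: it is `(c,w)`-cyclic for some elementary cycle `w` and not
`(c',w')`-cyclic for any `c' > c` and elementary cycle `w'`. -/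
def CCyclic (c : ℕ) (ρ : List R) : Prop :=
  (∃ w, CWCyclic c w ρ) ∧ ∀ c', c < c' → ∀ w', ¬ CWCyclic c' w' ρ

/-- The leaf position `p` of `d` is `(c,w)`-cyclic. -/
def LeafCW (c : ℕ) (w : List R) (d : RT R ar) (p : List ℕ) : Prop :=
  RT.LeafAt d p ∧ ∃ ρ, RT.seqTo d p = some ρ ∧ CWCyclic c w ρ

/-- The leaf position `p` of `d` is `c`-cyclic. -/
def LeafC (c : ℕ) (d : RT R ar) (p : List ℕ) : Prop :=
  RT.LeafAt d p ∧ ∃ ρ, RT.seqTo d p = some ρ ∧ CCyclic c ρ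

/-- The tree `d` is `c`-cyclic: some leaf of `d` is `c`-cyclic and no leaf of `d` is
`c'`-cyclic for any `c' > c`. -/
def TreeC (c : ℕ) (d : RT R ar) : Prop :=
  (∃ p, LeafC c d p) ∧ ∀ c', c < c' → ∀ p, ¬ LeafC c' d p

/-- `d ⊢_w d'` : there are positions `p ≤ p'` of `d` whose connecting label sequence is
`w`, and `d'` is obtained by replacing the subtree at `p` by the subtree at `p'`.
(The position `p'` is `p ++ q`.) -/
def CutW (w : List R) (d d' : RT R ar) : Prop :=
  ∃ p q t s, RT.subAt d p = some t ∧ RT.subAt t q = some s ∧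
    RT.seqTo t q = some w ∧ d' = RT.replaceAt d p s

/-- `d ⊢ d'` : `d ⊢_w d'` for some elementary cycle `w`. -/
def Cut (d d' : RT R ar) : Prop := ∃ w, ElementaryCycle w ∧ CutW w d d'

/-- The set of `w`-cutout trees of `d`. -/
def cotreesW (w : List R) (d : RT R ar) : Set (RT R ar) := {d' | Relation.TransGen (CutW w) d d'}

/-- The set of cutout trees of `d`. -/
def cotrees (d : RT R ar) : Set (RT R ar) := {d' | Relation.TransGen Cut d d'}

end Cyclicity

section Rules

variable {N R : Type}

/-- Well-sorted trees over a rule system given by `lhs` and `rhs`: at each node labelled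
`r`, the `i`-th child is a well-sorted tree whose root label has left-hand side equal to
the `i`-th nonterminal of `rhs r`. -/
inductive WellSorted (lhs : R → N) (rhs : R → List N) :
    RT R (fun r => (rhs r).length) → Prop
  | node (r : R) (ts : Fin (rhs r).length → RT R fun r => (rhs r).length)
      (hsort : ∀ i, lhs (ts i).rootRule = (rhs r).get i)
      (hrec : ∀ i, WellSorted lhs rhs (ts i)) : WellSorted lhs rhs (RT.node r ts)

/-- `T_R` : the set of (well-sorted) trees over the rule system. -/
def TRset (lhs : R → N) (rhs : R → List N) : Set (RT R fun r => (rhs r).length) :=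
  {d | WellSorted lhs rhs d}

/-- `(T_R)_A` : the set of trees of sort `A`. -/
def TRA (lhs : R → N) (rhs : R → List N) (A : N) : Set (RT R fun r => (rhs r).length) :=
  {d | WellSorted lhs rhs d ∧ lhs d.rootRule = A}

/-- `T_R^{(c)}` : the set of trees that are `c'`-cyclic for some `c' ≤ c`. -/
def TRcset (lhs : R → N) (rhs : R → List N) (c : ℕ) : Set (RT R fun r => (rhs r).length) :=
  {d | WellSorted lhs rhs d ∧ ∃ c' ≤ c, TreeC c' d}

end Rules

/-- An infinitary sum operation on a commutative monoid `K`, turning it into a complete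
monoid: the sum of the empty family is `0`, the sum of a singleton family is its member,
the sum of a two-element family is the binary sum, and the partition law holds (every
partition of a countable index set `I` into sets indexed by `J` is given by the fibers
of a map `g : I → J`). -/
structure InfSum (K : Type) [AddCommMonoid K] where
  isum : ∀ {I : Type} [Countable I], (I → K) → K
  isum_empty : ∀ {I : Type} [Countable I] (f : I → K), IsEmpty I → isum f = 0
  isum_single : ∀ {I : Type} [Countable I] (f : I → K) (j : I), (∀ i, i = j) → isum f = f j
  isum_pair : ∀ {I : Type} [Countable I] (f : I → K) (j j' : I), j ≠ j' →
    (∀ i, i = j ∨ i = j') → isum f = f j + f j'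
  isum_partition : ∀ {I J : Type} [Countable I] [Countable J] (f : I → K) (g : I → J),
    isum f = isum fun j : J => isum fun i : {i : I // g i = j} => f i.1

section MMonoid

variable {K : Type} [AddCommMonoid K]

/-- A complete monoid is d-complete if, whenever all the partial sums `Σ_{i ≤ n} f i`
eventually equal `k`, the infinitary sum of the family equals `k`. -/
def InfSum.DComplete (S : InfSum K) : Prop :=
  ∀ (k : K) (f : ℕ → K),
    (∃ n₀ : ℕ, ∀ n, n₀ ≤ n → (∑ i ∈ Finset.range (n + 1), f i) = k) → S.isum f = k

/-- A complete monoid is completely idempotent if the infinitary sum of every constant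
family over a nonempty countable index set is that constant. -/
def InfSum.CompletelyIdempotent (S : InfSum K) : Prop :=
  ∀ (I : Type) [Countable I], Nonempty I → ∀ k : K, S.isum (fun _ : I => k) = k

/-- The family `Ω` of operation sets contains all the null (constantly `0`) operations. -/
def HasZeroOps (Ω : ∀ n : ℕ, Set ((Fin n → K) → K)) : Prop :=
  ∀ n : ℕ, (fun _ : Fin n → K => (0 : K)) ∈ Ω n

/-- Distributivity of an M-monoid: every operation in `Ω` distributes over `+` in each
argument, and `0` is absorbing for every operation in `Ω`. -/
def DistributiveOps (Ω : ∀ n : ℕ, Set ((Fin n → K) → K)) : Prop :=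
  ∀ n : ℕ, ∀ ω ∈ Ω n,
    (∀ (x : Fin n → K) (i : Fin n) (a b : K),
      ω (Function.update x i (a + b)) = ω (Function.update x i a) + ω (Function.update x i b)) ∧
    (∀ x : Fin n → K, (∃ i, x i = 0) → ω x = 0)

end MMonoid

/-- The weighted system `(N, R, wt, K)` is `c`-closed: for every well-sorted tree `d` and
elementary cycle `w` such that some leaf position of `d` is `(c+1,w)`-cyclic, the weight
of `d` is subsumed by the (finite) `⊕`-sum of the weights of the `w`-cutout trees of `d`. -/
def CClosed {K : Type} [AddCommMonoid K] {N R : Type} (lhs : R → N) (rhs : R → List N)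
    (wt : ∀ r : R, (Fin (rhs r).length → K) → K) (c : ℕ) : Prop :=
  ∀ d : RT R (fun r => (rhs r).length), WellSorted lhs rhs d →
    ∀ w : List R, ElementaryCycle w → (∃ p, LeafCW (c + 1) w d p) →
      (wtval wt d + ∑ᶠ d' ∈ cotreesW w d, wtval wt d') = ∑ᶠ d' ∈ cotreesW w d, wtval wt d'

/-!
Complete idempotency makes `⊕` idempotent, and because every operation dominates its
arguments, the weight of a subtree is below the weight of the whole tree. Along a leaf path
that is `(|K|+1, w)`-cyclic the subtrees rooted at the `|K|+1` occurrences of `w` form a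
chain, so by pigeonhole two of them, `tᵢ ⊇ tⱼ`, have the same weight. The subtree `s` at
the end of the `i`-th occurrence lies between them, hence has that weight too, and cutting
`tᵢ` down to `s` yields a `w`-cutout tree `d'` with `wt d' = wt d`. Cutting strictly shrinks
trees, so there are finitely many cutout trees and `wt d` is absorbed by their sum.
-/

namespace RT

variable {R : Type} {ar : R → ℕ}

@[simp]
theorem subAt_nil (d : RT R ar) : d.subAt [] = some d := by
  cases d; rfl

@[simp]
theorem replaceAt_nil (d s : RT R ar) : d.replaceAt [] s = s := by
  cases d; rfl

theorem subAt_append : ∀ (p q : List ℕ) (d : RT R ar),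
    d.subAt (p ++ q) = (d.subAt p).bind (·.subAt q)
  | [], _, d => by simp
  | i :: p, q, .node r ts => by
      simp only [List.cons_append, subAt]
      split
      · exact subAt_append p q _
      · rfl

theorem length_seqTo : ∀ {p : List ℕ} {d : RT R ar} {l : List R},
    d.seqTo p = some l → l.length = p.length + 1
  | [], .node r ts, l, h => by
      rw [seqTo] at h
      cases h
      rfl
  | i :: p, .node r ts, l, h => by
      rw [seqTo] at h
      split at h
      · obtain ⟨l', h', rfl⟩ := Option.map_eq_some_iff.mp h
        simp [length_seqTo h']
      · cases h

theorem exists_subAt_seqTo_drop_of_seqTo_append : ∀ {a b : List ℕ} {d : RT R ar} {l : List R},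
    d.seqTo (a ++ b) = some l → ∃ t, d.subAt a = some t ∧ t.seqTo b = some (l.drop a.length)
  | [], b, d, l, h => ⟨d, subAt_nil d, by simpa using h⟩
  | i :: a, b, .node r ts, l, h => by
      rw [List.cons_append, seqTo] at h
      split at h
      case isTrue hi =>
        obtain ⟨l', h', rfl⟩ := Option.map_eq_some_iff.mp h
        obtain ⟨t, ht, hseq⟩ := exists_subAt_seqTo_drop_of_seqTo_append h'
        exact ⟨t, by rw [subAt, dif_pos hi, ht], by simpa using hseq⟩
      · cases h

theorem exists_subAt_of_seqTo {p : List ℕ} {d : RT R ar} {l : List R}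
    (h : d.seqTo p = some l) : ∃ t, d.subAt p = some t := by
  obtain ⟨t, ht, -⟩ := exists_subAt_seqTo_drop_of_seqTo_append (b := []) (by simpa using h)
  exact ⟨t, ht⟩

theorem seqTo_take : ∀ {p : List ℕ} {d : RT R ar} {l : List R} (m : ℕ),
    d.seqTo p = some l → d.seqTo (p.take m) = some (l.take (m + 1))
  | [], .node r ts, l, m, h => by
      rw [seqTo] at h
      cases h
      simp [seqTo]
  | i :: p, .node r ts, l, m, h => by
      rw [seqTo] at h
      split at h
      case isTrue hi =>
        obtain ⟨l', h', rfl⟩ := Option.map_eq_some_iff.mp h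
        cases m with
        | zero => simp [seqTo]
        | succ m => simp [seqTo, hi, seqTo_take m h']
      · cases h

def size : RT R ar → ℕ
  | node _ ts => ∑ i, size (ts i) + 1

theorem size_child_lt (r : R) (ts : Fin (ar r) → RT R ar) (i : Fin (ar r)) :
    (ts i).size < (node r ts).size := by
  rw [size]
  exact Nat.lt_succ_of_le
    (Finset.single_le_sum (f := fun j => (ts j).size) (fun _ _ => Nat.zero_le _)
      (Finset.mem_univ i))

theorem size_subAt_le : ∀ {q : List ℕ} {d t : RT R ar}, d.subAt q = some t → t.size ≤ d.size
  | [], _, _, h => by rw [subAt_nil] at h; cases h; rfl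
  | i :: q, .node r ts, t, h => by
      rw [subAt] at h
      split at h
      case isTrue hi => exact (size_subAt_le h).trans (size_child_lt r ts _).le
      · cases h

theorem size_subAt_lt {q : List ℕ} {d t : RT R ar} (hq : q ≠ []) (h : d.subAt q = some t) :
    t.size < d.size := by
  obtain ⟨i, q, rfl⟩ := List.exists_cons_of_ne_nil hq
  obtain ⟨r, ts⟩ := d
  rw [subAt] at h
  split at h
  case isTrue hi => exact (size_subAt_le h).trans_lt (size_child_lt r ts _)
  · cases h

theorem size_replaceAt_lt : ∀ {p : List ℕ} {d t s : RT R ar},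
    d.subAt p = some t → s.size < t.size → (d.replaceAt p s).size < d.size
  | [], _, _, _, h, hs => by rw [subAt_nil] at h; cases h; simpa using hs
  | i :: p, .node r ts, t, s, h, hs => by
      rw [subAt] at h
      split at h
      case isTrue hi =>
        rw [replaceAt, size, size, Nat.add_lt_add_iff_right]
        refine Finset.sum_lt_sum (fun j _ => ?_) ⟨⟨i, hi⟩, Finset.mem_univ _, ?_⟩
        · split_ifs with hj
          · obtain rfl : j = ⟨i, hi⟩ := Fin.ext hj
            exact (size_replaceAt_lt h hs).le
          · rfl
        · simpa using size_replaceAt_lt h hs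
      · cases h

theorem finite_setOf_size_le [Finite R] : ∀ n : ℕ, {t : RT R ar | t.size ≤ n}.Finite
  | 0 => Set.finite_empty.subset fun t ht => by cases t; simp [size] at ht
  | n + 1 => by
      have : Finite {t : RT R ar // t.size ≤ n} := (finite_setOf_size_le n).to_subtype
      refine (Set.finite_range
        fun x : Σ r : R, Fin (ar r) → {t : RT R ar // t.size ≤ n} =>
          node x.1 fun i => (x.2 i).1).subset ?_
      rintro ⟨r, ts⟩ ht
      exact ⟨⟨r, fun i => ⟨ts i, Nat.le_of_lt_succ
        ((size_child_lt r ts i).trans_le ht)⟩⟩, rfl⟩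

end RT

section Weights

variable {K R : Type} {ar : R → ℕ} {wt : ∀ r : R, (Fin (ar r) → K) → K}

theorem wtval_replaceAt : ∀ {p : List ℕ} {d t s : RT R ar}, d.subAt p = some t →
    wtval wt s = wtval wt t → wtval wt (d.replaceAt p s) = wtval wt d
  | [], _, _, _, h, hs => by rw [RT.subAt_nil] at h; cases h; simpa using hs
  | i :: p, .node r ts, t, s, h, hs => by
      rw [RT.subAt] at h
      split at h
      case isTrue hi =>
        rw [RT.replaceAt, wtval, wtval]
        congr 1
        funext j
        split_ifs with hj
        · obtain rfl : j = ⟨i, hi⟩ := Fin.ext hj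
          exact wtval_replaceAt h hs
        · rfl
      · cases h

variable [Preorder K]

theorem wtval_le_of_subAt
    (hwt : ∀ (r : R) (x : Fin (ar r) → K) (i : Fin (ar r)), x i ≤ wt r x) :
    ∀ {q : List ℕ} {d t : RT R ar}, d.subAt q = some t → wtval wt t ≤ wtval wt d
  | [], _, _, h => by rw [RT.subAt_nil] at h; cases h; rfl
  | i :: q, .node r ts, t, h => by
      rw [RT.subAt] at h
      split at h
      case isTrue hi =>
        exact (wtval_le_of_subAt hwt h).trans (hwt r (fun j => wtval wt (ts j)) ⟨i, hi⟩)
      · cases h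

theorem wtval_le_of_prefix
    (hwt : ∀ (r : R) (x : Fin (ar r) → K) (i : Fin (ar r)), x i ≤ wt r x)
    {a b : List ℕ} {d t s : RT R ar} (hab : a <+: b)
    (ht : d.subAt a = some t) (hs : d.subAt b = some s) : wtval wt s ≤ wtval wt t := by
  obtain ⟨c, rfl⟩ := hab
  rw [RT.subAt_append, ht] at hs
  exact wtval_le_of_subAt hwt hs

end Weights

section Cutouts

variable {R : Type} {ar : R → ℕ} {w : List R}

theorem CutW.size_lt {d d' : RT R ar} (hw : 1 < w.length) (h : CutW w d d') :
    d'.size < d.size := by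
  obtain ⟨p, q, t, s, ht, hs, hseq, rfl⟩ := h
  have hq : q ≠ [] := by
    rintro rfl
    have := RT.length_seqTo hseq
    simp only [List.length_nil] at this
    omega
  exact RT.size_replaceAt_lt ht (RT.size_subAt_lt hq hs)

theorem finite_cotreesW [Finite R] (hw : 1 < w.length) (d : RT R ar) :
    (cotreesW w d).Finite := by
  refine (RT.finite_setOf_size_le d.size).subset fun d' hd' => ?_
  have hlt : d'.size < d.size := by
    induction hd' with
    | single h => exact h.size_lt hw
    | tail _ h ih => exact (h.size_lt hw).trans ih
  exact hlt.le

/-- An occurrence of `w` at index `a` of the label sequence of `p` is a `w`-cut from the subtree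
at `p.take a` to the subtree at the last node of the occurrence. -/
theorem exists_cutW_of_prefix_drop {d : RT R ar} {p : List ℕ} {ρ : List R} {a : ℕ}
    (hseq : d.seqTo p = some ρ) (hocc : w <+: ρ.drop a) (hw : w ≠ []) :
    ∃ t s, d.subAt (p.take a) = some t ∧ d.subAt (p.take (a + (w.length - 1))) = some s ∧
      CutW w d (d.replaceAt (p.take a) s) := by
  have hlen := RT.length_seqTo hseq
  have hwlen := hocc.length_le
  have hwpos := List.length_pos_iff.mpr hw
  simp only [List.length_drop] at hwlen
  obtain ⟨t, ht, hseqt⟩ := RT.exists_subAt_seqTo_drop_of_seqTo_append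
    (by rwa [List.take_append_drop] : d.seqTo (p.take a ++ p.drop a) = some ρ)
  rw [List.length_take_of_le (by omega)] at hseqt
  set q := (p.drop a).take (w.length - 1)
  have hseqq : t.seqTo q = some w := by
    rw [RT.seqTo_take _ hseqt, Nat.sub_add_cancel hwpos, ← List.prefix_iff_eq_take.mp hocc]
  obtain ⟨s, hs⟩ := RT.exists_subAt_of_seqTo hseqq
  refine ⟨t, s, ht, ?_, ⟨p.take a, q, t, s, ht, hs, hseqq, rfl⟩⟩
  rw [List.take_add, RT.subAt_append, ht]
  exact hs

end Cutouts

theorem CWCyclic.exists_occurrences {R : Type} {n : ℕ} {w ρ : List R} (h : CWCyclic n w ρ) :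
    ∃ m : ℕ → ℕ, (∀ i j, i < j → m i + w.length ≤ m j) ∧
      ∀ i < n, w <+: ρ.drop (m i) := by
  obtain ⟨-, v, rfl, -⟩ := h
  set g : ℕ → List R := fun i => w ++ v (i + 1)
  set m : ℕ → ℕ := fun i => (v 0 ++ ((List.range i).map g).flatten).length
  have hm_succ : ∀ i, m (i + 1) = m i + w.length + (v (i + 1)).length := fun i => by
    simp [m, g, List.range_succ, Nat.add_assoc]
  have hm_mono : Monotone m := monotone_nat_of_le_succ fun i => by rw [hm_succ]; omega
  refine ⟨m, fun i j hij => (hm_succ i ▸ Nat.le_add_right _ _).trans (hm_mono hij),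
    fun i hi => ?_⟩
  obtain ⟨k, rfl⟩ : ∃ k, n = i + (k + 1) := ⟨n - i - 1, by omega⟩
  rw [List.range_add, List.range_succ_eq_map]
  simp [m, g, List.append_assoc]

theorem InfSum.CompletelyIdempotent.add_self {K : Type} [AddCommMonoid K] {S : InfSum K}
    (h : S.CompletelyIdempotent) (k : K) : k + k = k := by
  rw [← S.isum_pair (fun _ : Bool => k) true false (by decide) (by decide)]
  exact h Bool ⟨true⟩ k

theorem add_finsum_mem_eq_of_mem {α M : Type} [AddCommMonoid M] {f : α → M} {s : Set α}
    {a : α} {b : M} (hs : s.Finite) (ha : a ∈ s) (hb : b + f a = f a) :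
    b + ∑ᶠ x ∈ s, f x = ∑ᶠ x ∈ s, f x := by
  rw [← hs.coe_toFinset, finsum_mem_coe_finset,
    ← Finset.add_sum_erase _ f (hs.mem_toFinset.mpr ha), ← add_assoc, hb]

theorem exists_mem_cotreesW_wtval_eq {K R : Type} [Fintype K] [PartialOrder K] {ar : R → ℕ}
    {wt : ∀ r : R, (Fin (ar r) → K) → K}
    (hwt : ∀ (r : R) (x : Fin (ar r) → K) (i : Fin (ar r)), x i ≤ wt r x)
    {d : RT R ar} {p : List ℕ} {ρ w : List R} (hseq : d.seqTo p = some ρ)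
    (hcyc : CWCyclic (Fintype.card K + 1) w ρ) :
    ∃ d' ∈ cotreesW w d, wtval wt d' = wtval wt d := by
  have hw : w ≠ [] := List.ne_nil_of_length_pos (by have := hcyc.1.1; omega)
  obtain ⟨m, hgap, hocc⟩ := hcyc.exists_occurrences
  choose T S hT hS hcut using fun i : Fin (Fintype.card K + 1) =>
    exists_cutW_of_prefix_drop hseq (hocc i i.2) hw
  obtain ⟨i, j, hne, heq⟩ :=
    Fintype.exists_ne_map_eq_of_card_lt (fun i => wtval wt (T i)) (by simp)
  wlog hij : i < j generalizing i j
  · exact this j i hne.symm heq.symm (lt_of_le_of_ne (not_lt.mp hij) hne.symm)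
  have hST : wtval wt (S i) = wtval wt (T i) := by
    refine le_antisymm (wtval_le_of_prefix hwt (List.take_prefix_take_left (by omega))
      (hT i) (hS i)) ?_
    rw [heq]
    exact wtval_le_of_prefix hwt
      (List.take_prefix_take_left (by have := hgap i j hij; omega)) (hS i) (hT j)
  exact ⟨_, .single (hcut i), wtval_replaceAt (hT i) hST⟩

theorem finite_idempotent_implies_closed_general {N R K : Type} [Fintype R]
    [Fintype K] [PartialOrder K] [AddCommMonoid K]
    (S : InfSum K) (hidem : S.CompletelyIdempotent)
    (Ω : ∀ n : ℕ, Set ((Fin n → K) → K))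
    (hmono : ∀ n : ℕ, ∀ ω ∈ Ω n, ∀ (x : Fin n → K) (i : Fin n), x i ≤ ω x)
    (lhs : R → N) (rhs : R → List N)
    (wt : ∀ r : R, (Fin (rhs r).length → K) → K) (hwt : ∀ r : R, wt r ∈ Ω (rhs r).length) :
    CClosed lhs rhs wt (Fintype.card K) ∧ ∃ c : ℕ, CClosed lhs rhs wt c := by
  have hclosed : CClosed lhs rhs wt (Fintype.card K) := by
    rintro d - w hw ⟨p, -, ρ, hseq, hcyc⟩
    obtain ⟨d', hd', hwt'⟩ :=
      exists_mem_cotreesW_wtval_eq (fun r => hmono _ _ (hwt r)) hseq hcyc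
    exact add_finsum_mem_eq_of_mem (finite_cotreesW hw.1 d) hd'
      (by rw [hwt', hidem.add_self])
  exact ⟨hclosed, _, hclosed⟩

/-- Every weighted system whose weight algebra is a finite, completely idempotent,
distributive complete M-monoid equipped with a partial order under which every operation
in `Ω` dominates each of its arguments is `|K|`-closed, and in particular closed. -/
theorem finite_idempotent_implies_closed {N R K : Type} [Fintype N] [Nonempty N] [Fintype R]
    [Fintype K] [PartialOrder K] [AddCommMonoid K]
    (S : InfSum K) (hidem : S.CompletelyIdempotent)
    (Ω : ∀ n : ℕ, Set ((Fin n → K) → K)) (hΩ0 : HasZeroOps Ω) (hΩd : DistributiveOps Ω)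
    (hmono : ∀ n : ℕ, ∀ ω ∈ Ω n, ∀ (x : Fin n → K) (i : Fin n), x i ≤ ω x)
    (lhs : R → N) (rhs : R → List N)
    (wt : ∀ r : R, (Fin (rhs r).length → K) → K) (hwt : ∀ r : R, wt r ∈ Ω (rhs r).length) :
    CClosed lhs rhs wt (Fintype.card K) ∧ ∃ c : ℕ, CClosed lhs rhs wt c :=
  finite_idempotent_implies_closed_general S hidem Ω hmono lhs rhs wt hwt
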